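/- (Median decomposition) For any weighted lattice polynomial function p : L^n → L, any index k ∈ [n], and any x ∈ L^n, p(x) = median(p_k^a(x), x_k, p_k^b(x)), where p_k^a and p_k^b are obtained from p by fixing the k-th argument to a and b respectively, and the median of three elements of a linear order is the middle one. -/

import Mathlib

open Finset MeasureTheory ProbabilityTheory

/-- Weighted lattice polynomial functions on the interval L = [a,b] ⊆ ℝ:
built inductively from projections, constants in [a,b], pointwise min and max. -/
inductive IsWLP (a b : ℝ) (n : ℕ) : ((Fin n → ℝ) → ℝ) → Prop
  | proj (k : Fin n) : IsWLP a b n (fun x => x k)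
  | const (c : ℝ) (hc : c ∈ Set.Icc a b) : IsWLP a b n (fun _ => c)
  | inf {p q} : IsWLP a b n p → IsWLP a b n q → IsWLP a b n (fun x => min (p x) (q x))
  | sup {p q} : IsWLP a b n p → IsWLP a b n q → IsWLP a b n (fun x => max (p x) (q x))

/-- The characteristic vector e_S of S ⊆ [n] in {a,b}^n. -/
def charVec (a b : ℝ) {n : ℕ} (S : Finset (Fin n)) : Fin n → ℝ := fun i => if i ∈ S then b else a

/-!
Lattice polynomial functions are monotone, so `p_k^a(x) ≤ p_k^b(x)`, and then the median of
`p_k^a(x), x_k, p_k^b(x)` is the clamp `(p_k^a(x) ⊔ x_k) ⊓ p_k^b(x)`. Clamped decompositions are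
preserved by `⊓` by distributivity and, between monotone functions, by `⊔` by modularity; they hold
trivially for projections and constants, so they hold for every lattice polynomial function.
-/

open Function

section

variable {ι α : Type*} [DecidableEq ι] [DistribLattice α]

theorem median_eq_sup_inf_of_le {u w : α} (v : α) (h : u ≤ w) :
    u ⊓ v ⊔ v ⊓ w ⊔ w ⊓ u = (u ⊔ v) ⊓ w := by
  rw [inf_eq_right.2 h, sup_right_comm, sup_comm (u ⊓ v), sup_inf_self,
    sup_inf_assoc_of_le v h]

/-- The median decomposition of `p` in the variable `k`, in the clamped form it takes for
monotone `p`. -/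
def MedianDecomposable (k : ι) (a b : α) (p : (ι → α) → α) : Prop :=
  ∀ x : ι → α, a ≤ x k → x k ≤ b → p x = (p (update x k a) ⊔ x k) ⊓ p (update x k b)

namespace MedianDecomposable

variable {k : ι} {a b : α} {p q : (ι → α) → α}

theorem apply (j : ι) : MedianDecomposable k a b (fun x => x j) := by
  intro x ha hb
  rcases eq_or_ne j k with rfl | hjk
  · simp [sup_eq_right.2 ha, inf_eq_left.2 hb]
  · simp [update_of_ne hjk]

theorem const (c : α) : MedianDecomposable k a b (fun _ => c) := fun _ _ _ => by simp

theorem inf (hp : MedianDecomposable k a b p) (hq : MedianDecomposable k a b q) :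
    MedianDecomposable k a b (fun x => p x ⊓ q x) := by
  intro x ha hb
  beta_reduce
  rw [hp x ha hb, hq x ha hb, sup_inf_right]
  ac_rfl

theorem sup (hp : MedianDecomposable k a b p) (hq : MedianDecomposable k a b q)
    (hp_mono : Monotone p) (hq_mono : Monotone q) :
    MedianDecomposable k a b (fun x => p x ⊔ q x) := by
  intro x ha hb
  have hab : update x k a ≤ update x k b := update_mono (ha.trans hb)
  beta_reduce
  rw [hp x ha hb, hq x ha hb, sup_inf_assoc_of_le _ (hp_mono hab),
    sup_inf_assoc_of_le _ (hq_mono hab),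
    sup_inf_assoc_of_le _ (sup_le_sup (hp_mono hab) (hq_mono hab)), inf_sup_left]
  ac_rfl

end MedianDecomposable

end

namespace IsWLP

variable {a b : ℝ} {n : ℕ} {p : (Fin n → ℝ) → ℝ}

theorem monotone (hp : IsWLP a b n p) : Monotone p := by
  induction hp with
  | proj k => exact monotone_eval k
  | const c _ => exact monotone_const
  | inf _ _ ihp ihq => exact ihp.min ihq
  | sup _ _ ihp ihq => exact ihp.max ihq

theorem medianDecomposable (hp : IsWLP a b n p) (k : Fin n) : MedianDecomposable k a b p := by
  induction hp with
  | proj j => exact .apply j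
  | const c _ => exact .const c
  | inf _ _ ihp ihq => exact ihp.inf ihq
  | sup hp hq ihp ihq => exact ihp.sup ihq hp.monotone hq.monotone

end IsWLP

theorem wlp_median_decomposition_general (a b : ℝ) (n : ℕ)
    (p : (Fin n → ℝ) → ℝ) (hp : IsWLP a b n p) (k : Fin n) :
    ∀ x : Fin n → ℝ, (∀ i, x i ∈ Set.Icc a b) →
      p x = max (max (min (p (Function.update x k a)) (x k))
                     (min (x k) (p (Function.update x k b))))
                (min (p (Function.update x k b)) (p (Function.update x k a))) := by
  intro x hx
  obtain ⟨hak, hkb⟩ := hx k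
  have hab : update x k a ≤ update x k b := update_mono (hak.trans hkb)
  exact (hp.medianDecomposable k x hak hkb).trans
    (median_eq_sup_inf_of_le _ (hp.monotone hab)).symm

/-- Median decomposition: p(x) = median(p_k^a(x), x_k, p_k^b(x)), where
median(u,v,w) = (u ∧ v) ∨ (v ∧ w) ∨ (w ∧ u). -/
theorem wlp_median_decomposition (a b : ℝ) (hab : a ≤ b) (n : ℕ)
    (p : (Fin n → ℝ) → ℝ) (hp : IsWLP a b n p) (k : Fin n) :
    ∀ x : Fin n → ℝ, (∀ i, x i ∈ Set.Icc a b) →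
      p x = max (max (min (p (Function.update x k a)) (x k))
                     (min (x k) (p (Function.update x k b))))
                (min (p (Function.update x k b)) (p (Function.update x k a))) :=
  wlp_median_decomposition_general a b n p hp k
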